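/- arXiv:1102.1341 — 6 statements merged into one kernel-verified Lean document; each statement's English description precedes it below -/
import Mathlib

section
/- Let ≤ be a partial order on the finite player set N and let the set system be F = O(N), the collection of all downsets of (N, ≤). Then a nonzero vector r ∈ ℝ^N generates an extremal ray of the recession cone C(0) if and only if r is a positive scalar multiple of (1_j, −1_i) for some i, j ∈ N with j ≺ i (j covered by i). -/
open Finset

variable {ι : Type*}

/-- `S` is a downset (lower set) of the poset `ι`. -/
def IsDownset [PartialOrder ι] (S : Finset ι) : Prop :=
  ∀ ⦃i⦄, i ∈ S → ∀ ⦃j⦄, j ≤ i → j ∈ S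

/-- The recession cone `C(0)` of the core, for the set system `F`:
`{x : x(S) ≥ 0 for all S ∈ F, x(N) = 0}`. -/
def recCone [Fintype ι] (F : Set (Finset ι)) : Set (ι → ℝ) :=
  {x | (∀ S ∈ F, 0 ≤ ∑ k ∈ S, x k) ∧ ∑ k, x k = 0}

/-- The vector `(1_j, -1_i)` : `1` at coordinate `j`, `-1` at coordinate `i`, `0` elsewhere. -/
def unitDiff [DecidableEq ι] (j i : ι) : ι → ℝ :=
  fun k => if k = j then 1 else if k = i then -1 else 0

/-- A nonzero `r ∈ C(0)` generates an extremal ray of `C(0)` if whenever `r = y + z` with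
`y, z ∈ C(0)`, both `y` and `z` are nonnegative scalar multiples of `r`. -/
def IsExtremalRay [Fintype ι] (F : Set (Finset ι)) (r : ι → ℝ) : Prop :=
  r ≠ 0 ∧ r ∈ recCone F ∧
    ∀ y ∈ recCone F, ∀ z ∈ recCone F, r = y + z →
      (∃ a : ℝ, 0 ≤ a ∧ y = a • r) ∧ ∃ b : ℝ, 0 ≤ b ∧ z = b • r

/-!
For a covering pair `j ⋖ i`, the downsets on which `(1_j, -1_i)` vanishes are exactly those
that do not separate `j` from `i`. Any summand `y` of a multiple of it therefore vanishes on
all of them, and writing `y k = y(↓k) - y(↓k \ {k})` (or, when `j < k`, the same difference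
after adjoining `↓i`) kills every coordinate outside `{i, j}`.

Conversely, let `r` span an extremal ray and pick `r j > 0`. Null downsets (`r(S) = 0`) are
closed under intersection, so there is a least null downset `P ∋ j`; as `r(P) = 0 < r j`, the
element `j` is not maximal in `P`, which yields `i ∈ P` with `j ⋖ i`. Every downset separating
`j` from `i` then has positive `r`-value, so `r - ε (1_j, -1_i)` stays in the cone for small
`ε > 0`, and extremality forces `r` onto the ray of `(1_j, -1_i)`.
-/

namespace IsDownset

variable [PartialOrder ι] {S T : Finset ι}

lemma univ [Fintype ι] : IsDownset (univ : Finset ι) := fun _ _ _ _ => mem_univ _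

lemma inter [DecidableEq ι] (hS : IsDownset S) (hT : IsDownset T) : IsDownset (S ∩ T) :=
  fun _ hi _ hji => mem_inter.2 ⟨hS (mem_inter.1 hi).1 hji, hT (mem_inter.1 hi).2 hji⟩

lemma union [DecidableEq ι] (hS : IsDownset S) (hT : IsDownset T) : IsDownset (S ∪ T) := by
  intro i hi j hji
  rcases mem_union.1 hi with hi | hi
  exacts [mem_union_left _ (hS hi hji), mem_union_right _ (hT hi hji)]

lemma filter_le [Fintype ι] (k : ι) [DecidablePred (· ≤ k)] :
    IsDownset ({m | m ≤ k} : Finset ι) := by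
  intro i hi j hji
  simp only [mem_filter_univ] at hi ⊢
  exact hji.trans hi

lemma filter_lt [Fintype ι] (k : ι) [DecidablePred (· < k)] :
    IsDownset ({m | m < k} : Finset ι) := by
  intro i hi j hji
  simp only [mem_filter_univ] at hi ⊢
  exact hji.trans_lt hi

lemma erase [DecidableEq ι] (hS : IsDownset S) {j : ι} (hj : ∀ x ∈ S, ¬ j < x) :
    IsDownset (S.erase j) := by
  intro i hi k hki
  obtain ⟨hij, hiS⟩ := mem_erase.1 hi
  refine mem_erase.2 ⟨?_, hS hiS hki⟩
  rintro rfl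
  exact hj i hiS (hki.lt_of_ne (Ne.symm hij))

end IsDownset

lemma insert_filter_lt_eq_filter_le [Fintype ι] [PartialOrder ι] [DecidableEq ι] (k : ι)
    [DecidablePred (· < k)] [DecidablePred (· ≤ k)] :
    insert k ({m | m < k} : Finset ι) = ({m | m ≤ k} : Finset ι) := by
  ext m
  simp only [mem_insert, mem_filter, mem_univ, true_and, le_iff_lt_or_eq]
  tauto

lemma unitDiff_apply_left [DecidableEq ι] (j i : ι) : unitDiff j i j = 1 := if_pos rfl

lemma sum_unitDiff_of_isDownset [PartialOrder ι] [DecidableEq ι] {i j : ι} (hji : j < i)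
    {S : Finset ι} (hS : IsDownset S) :
    ∑ k ∈ S, unitDiff j i k = if j ∈ S ∧ i ∉ S then 1 else 0 := by
  have hsum : ∑ k ∈ S, unitDiff j i k
      = (if j ∈ S then 1 else 0) - if i ∈ S then 1 else 0 := by
    rw [← sum_ite_eq' S j (fun _ => (1 : ℝ)), ← sum_ite_eq' S i (fun _ => (1 : ℝ)),
      ← sum_sub_distrib]
    refine sum_congr rfl fun k _ => ?_
    unfold unitDiff
    split_ifs <;> simp_all [hji.ne]
  rw [hsum]
  by_cases hiS : i ∈ S
  · simp [hiS, hS hiS hji.le]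
  · simp [hiS]

lemma exists_pos_forall_le_of_forall_pos {α : Type*} [Fintype α] {p : α → Prop}
    {f : α → ℝ} (hf : ∀ a, p a → 0 < f a) :
    ∃ ε : ℝ, 0 < ε ∧ ∀ a, p a → ε ≤ f a := by
  classical
  rcases (univ.filter p).eq_empty_or_nonempty with hempty | hne
  · refine ⟨1, one_pos, fun a ha => absurd ((mem_filter_univ _).2 ha) ?_⟩
    simp [hempty]
  · obtain ⟨a, ha, hmin⟩ := exists_min_image _ f hne
    exact ⟨f a, hf a ((mem_filter_univ _).1 ha), fun b hb => hmin b ((mem_filter_univ _).2 hb)⟩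

section RecCone

variable [Fintype ι] [PartialOrder ι]

lemma smul_unitDiff_mem_recCone [DecidableEq ι] {i j : ι} (hji : j < i) {c : ℝ} (hc : 0 ≤ c) :
    c • unitDiff j i ∈ recCone {S : Finset ι | IsDownset S} := by
  refine ⟨fun S hS => ?_, ?_⟩
  all_goals simp only [Pi.smul_apply, smul_eq_mul, ← mul_sum]
  · rw [sum_unitDiff_of_isDownset hji hS]
    split_ifs <;> simp [hc]
  · rw [sum_unitDiff_of_isDownset hji IsDownset.univ]
    simp

lemma sum_inter_eq_zero [DecidableEq ι] {r : ι → ℝ}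
    (hr : r ∈ recCone {S : Finset ι | IsDownset S}) {S T : Finset ι} (hS : IsDownset S)
    (hT : IsDownset T) (hS0 : ∑ k ∈ S, r k = 0) (hT0 : ∑ k ∈ T, r k = 0) :
    ∑ k ∈ S ∩ T, r k = 0 := by
  have hunion := hr.1 _ (hS.union hT)
  have hinter := hr.1 _ (hS.inter hT)
  have := sum_union_inter (s₁ := S) (s₂ := T) (f := r)
  linarith

lemma apply_eq_zero_of_forall_sum_eq_zero {y : ι → ℝ} {i j : ι} (hji : j ⋖ i)
    (hnull : ∀ S, IsDownset S → (j ∈ S → i ∈ S) → ∑ k ∈ S, y k = 0) {k : ι} (hkj : k ≠ j)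
    (hki : k ≠ i) : y k = 0 := by
  classical
  suffices ∃ D : Finset ι, k ∉ D ∧ IsDownset D ∧ IsDownset (insert k D) ∧
      (j ∈ D → i ∈ D) ∧ (j ∈ insert k D → i ∈ insert k D) by
    obtain ⟨D, hkD, hD, hkD', hjiD, hjikD⟩ := this
    have := sum_insert (f := y) hkD
    rw [hnull _ hD hjiD, hnull _ hkD' hjikD] at this
    linarith
  by_cases hjk : j < k
  · -- adjoining `↓i` makes both sets contain `i`, and `k ∉ ↓i` because `j ⋖ i`
    refine ⟨({m | m < k} : Finset ι) ∪ ({m | m ≤ i} : Finset ι), ?_,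
      (IsDownset.filter_lt k).union (IsDownset.filter_le i), ?_,
      fun _ => mem_union_right _ ((mem_filter_univ _).2 le_rfl),
      fun _ => mem_insert_of_mem (mem_union_right _ ((mem_filter_univ _).2 le_rfl))⟩
    · simp only [mem_union, mem_filter_univ, lt_irrefl, false_or]
      exact fun hki' => hji.2 hjk (hki'.lt_of_ne hki)
    · rw [← insert_union, insert_filter_lt_eq_filter_le]
      exact (IsDownset.filter_le k).union (IsDownset.filter_le i)
  · have hjk' : j ∉ ({m | m ≤ k} : Finset ι) :=
      fun h => hjk (((mem_filter_univ _).1 h).lt_of_ne (Ne.symm hkj))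
    refine ⟨({m | m < k} : Finset ι), by simp, IsDownset.filter_lt k, ?_, fun h => absurd h ?_,
      fun h => absurd h ?_⟩
    · rw [insert_filter_lt_eq_filter_le]; exact IsDownset.filter_le k
    · exact fun h => hjk' ((mem_filter_univ _).2 ((mem_filter_univ _).1 h).le)
    · rwa [insert_filter_lt_eq_filter_le]

lemma eq_apply_smul_unitDiff_of_sum_eq_zero [DecidableEq ι] {y : ι → ℝ} {i j : ι}
    (hji : j ⋖ i) (hnull : ∀ S, IsDownset S → (j ∈ S → i ∈ S) → ∑ k ∈ S, y k = 0) :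
    y = y j • unitDiff j i := by
  have hzero : ∀ k, k ≠ j → k ≠ i → y k = 0 :=
    fun k hkj hki => apply_eq_zero_of_forall_sum_eq_zero hji hnull hkj hki
  have hyi : y i = -y j := by
    have := hnull _ IsDownset.univ fun _ => mem_univ i
    rw [Fintype.sum_eq_add i j hji.ne' fun k hk => hzero k hk.2 hk.1] at this
    linarith
  ext k
  by_cases hkj : k = j
  · subst hkj; simp [unitDiff_apply_left]
  by_cases hki : k = i
  · subst hki; simp [unitDiff, hkj, hyi]
  · simp [unitDiff, hkj, hki, hzero k hkj hki]

lemma exists_nonneg_smul_of_add_eq_smul_unitDiff [DecidableEq ι] {i j : ι} (hji : j ⋖ i)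
    {c : ℝ} (hc : 0 < c) {y z : ι → ℝ} (hy : y ∈ recCone {S : Finset ι | IsDownset S})
    (hz : z ∈ recCone {S : Finset ι | IsDownset S}) (hyz : c • unitDiff j i = y + z) :
    ∃ a : ℝ, 0 ≤ a ∧ y = a • (c • unitDiff j i) := by
  classical
  have hnull : ∀ S, IsDownset S → (j ∈ S → i ∈ S) → ∑ k ∈ S, y k = 0 := by
    intro S hS hjiS
    have hsum : ∑ k ∈ S, y k + ∑ k ∈ S, z k = 0 := by
      rw [← sum_add_distrib]
      simp only [← Pi.add_apply y z, ← hyz, Pi.smul_apply, smul_eq_mul, ← mul_sum,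
        sum_unitDiff_of_isDownset hji.lt hS]
      rw [if_neg fun h => h.2 (hjiS h.1), mul_zero]
    linarith [hy.1 S hS, hz.1 S hS]
  have hy_eq := eq_apply_smul_unitDiff_of_sum_eq_zero hji hnull
  have hyj : 0 ≤ y j := by
    have hj : j ∈ ({m | m ≤ j} : Finset ι) ∧ i ∉ ({m | m ≤ j} : Finset ι) := by
      simpa using hji.lt.not_ge
    have := hy.1 _ (IsDownset.filter_le j)
    rw [hy_eq] at this
    simpa only [Pi.smul_apply, smul_eq_mul, ← mul_sum, sum_unitDiff_of_isDownset hji.lt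
      (IsDownset.filter_le j), if_pos hj, mul_one] using this
  refine ⟨y j / c, div_nonneg hyj hc.le, ?_⟩
  rw [smul_smul, div_mul_cancel₀ _ hc.ne']
  exact hy_eq

lemma isExtremalRay_smul_unitDiff [DecidableEq ι] {i j : ι} (hji : j ⋖ i) {c : ℝ}
    (hc : 0 < c) :
    IsExtremalRay {S : Finset ι | IsDownset S} (c • unitDiff j i) := by
  refine ⟨fun h => ?_, smul_unitDiff_mem_recCone hji.lt hc.le, fun y hy z hz hyz =>
    ⟨exists_nonneg_smul_of_add_eq_smul_unitDiff hji hc hy hz hyz,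
      exists_nonneg_smul_of_add_eq_smul_unitDiff hji hc hz hy (hyz.trans (add_comm y z))⟩⟩
  have := congrFun h j
  simp only [Pi.smul_apply, unitDiff_apply_left, smul_eq_mul, mul_one, Pi.zero_apply] at this
  exact hc.ne' this

lemma exists_covBy_mem_of_sum_eq_zero {r : ι → ℝ}
    (hr : r ∈ recCone {S : Finset ι | IsDownset S}) {j : ι} (hj : 0 < r j) :
    ∃ i, j ⋖ i ∧ ∀ S, IsDownset S → j ∈ S → ∑ k ∈ S, r k = 0 → i ∈ S := by
  classical
  let P := ({S | IsDownset S ∧ ∑ k ∈ S, r k = 0 ∧ j ∈ S} : Finset (Finset ι)).inf id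
  have hP : IsDownset P ∧ ∑ k ∈ P, r k = 0 ∧ j ∈ P :=
    inf_induction (p := fun S => IsDownset S ∧ ∑ k ∈ S, r k = 0 ∧ j ∈ S)
      ⟨IsDownset.univ, hr.2, mem_univ j⟩
      (fun S hS T hT => ⟨hS.1.inter hT.1, sum_inter_eq_zero hr hS.1 hT.1 hS.2.1 hT.2.1,
        mem_inter.2 ⟨hS.2.2, hT.2.2⟩⟩)
      fun S hS => (mem_filter_univ S).1 hS
  have hP_le : ∀ S, IsDownset S → j ∈ S → ∑ k ∈ S, r k = 0 → P ⊆ S :=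
    fun S hS hjS hS0 => inf_le (f := id) ((mem_filter_univ _).2 ⟨hS, hS0, hjS⟩)
  obtain ⟨x, hxP, hjx⟩ : ∃ x ∈ P, j < x := by
    by_contra! hmax
    have := hr.1 _ (hP.1.erase hmax)
    have := sum_erase_add P r hP.2.2
    linarith [hP.2.1]
  obtain ⟨i, hji, hix⟩ := exists_covBy_le_of_lt hjx
  exact ⟨i, hji, fun S hS hjS hS0 => hP_le S hS hjS hS0 (hP.1 hxP hix)⟩

lemma exists_covBy_sub_smul_unitDiff_mem [DecidableEq ι] {r : ι → ℝ}
    (hr : r ∈ recCone {S : Finset ι | IsDownset S}) (hr0 : r ≠ 0) :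
    ∃ i j, j ⋖ i ∧ ∃ ε : ℝ, 0 < ε ∧
      r - ε • unitDiff j i ∈ recCone {S : Finset ι | IsDownset S} := by
  obtain ⟨j, -, hj⟩ := exists_pos_of_sum_zero_of_exists_nonzero r hr.2 (by
    by_contra! h
    exact hr0 (funext fun k => h k (mem_univ k)))
  obtain ⟨i, hji, hsep⟩ := exists_covBy_mem_of_sum_eq_zero hr hj
  obtain ⟨ε, hε, hε_le⟩ := exists_pos_forall_le_of_forall_pos
    (p := fun S : Finset ι => IsDownset S ∧ j ∈ S ∧ i ∉ S) (f := fun S => ∑ k ∈ S, r k)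
    fun S ⟨hS, hjS, hiS⟩ => (hr.1 S hS).lt_of_ne fun h => hiS (hsep S hS hjS h.symm)
  refine ⟨i, j, hji, ε, hε, fun S hS => ?_, ?_⟩
  all_goals simp only [Pi.sub_apply, Pi.smul_apply, smul_eq_mul, sum_sub_distrib, ← mul_sum]
  · rw [sum_unitDiff_of_isDownset hji.lt hS]
    split_ifs with hsepS
    · linarith [hε_le S ⟨hS, hsepS⟩]
    · linarith [hr.1 S hS]
  · rw [sum_unitDiff_of_isDownset hji.lt IsDownset.univ, hr.2]
    simp

lemma IsExtremalRay.exists_covBy [DecidableEq ι] {r : ι → ℝ}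
    (h : IsExtremalRay {S : Finset ι | IsDownset S} r) :
    ∃ i j : ι, j ⋖ i ∧ ∃ c : ℝ, 0 < c ∧ r = c • unitDiff j i := by
  obtain ⟨hr0, hr, hext⟩ := h
  obtain ⟨i, j, hji, ε, hε, hsub⟩ := exists_covBy_sub_smul_unitDiff_mem hr hr0
  obtain ⟨⟨a, ha, hεa⟩, -⟩ :=
    hext _ (smul_unitDiff_mem_recCone hji.lt hε.le) _ hsub (add_sub_cancel _ _).symm
  have ha0 : a ≠ 0 := by
    rintro rfl
    have := congrFun hεa j
    simp only [Pi.smul_apply, unitDiff_apply_left, smul_eq_mul, mul_one, zero_mul] at this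
    exact hε.ne' this
  refine ⟨i, j, hji, ε / a, div_pos hε (ha.lt_of_ne' ha0), ?_⟩
  rw [div_eq_inv_mul, mul_smul, hεa, smul_smul, inv_mul_cancel₀ ha0, one_smul]

end RecCone

theorem extremalRay_iff_unitDiff_of_covBy_general
    [Fintype ι] [DecidableEq ι] [PartialOrder ι] (r : ι → ℝ) :
    IsExtremalRay {S : Finset ι | IsDownset S} r ↔
      ∃ i j : ι, j ⋖ i ∧ ∃ c : ℝ, 0 < c ∧ r = c • unitDiff j i := by
  refine ⟨IsExtremalRay.exists_covBy, ?_⟩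
  rintro ⟨i, j, hji, c, hc, rfl⟩
  exact isExtremalRay_smul_unitDiff hji hc

/-- for the set system `O(N)` of all downsets of the finite poset `N`,
a nonzero vector `r` generates an extremal ray of `C(0)` iff `r` is a positive scalar
multiple of `(1_j, -1_i)` for some `i, j` with `j ≺ i` (`j` covered by `i`). -/
theorem extremalRay_iff_unitDiff_of_covBy
    [Fintype ι] [DecidableEq ι] [PartialOrder ι] (r : ι → ℝ) (hr : r ≠ 0) :
    IsExtremalRay {S : Finset ι | IsDownset S} r ↔
      ∃ i j : ι, j ⋖ i ∧ ∃ c : ℝ, 0 < c ∧ r = c • unitDiff j i :=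
  extremalRay_iff_unitDiff_of_covBy_general r
end

section
/- Let ≤ be a partial order on the finite player set N with height h(N), and let F = O(N) be its downsets. If K_1, …, K_m ∈ O(N) ∖ {N} are downsets such that the restricted recession cone {x ∈ ℝ^N : x(S) ≥ 0 for all S ∈ O(N), x(N) = 0, and x(K_t) = 0 for t = 1, …, m} equals {0}, then m ≥ h(N). (The minimum number of additional equalities needed to make the core bounded is h(N).) -/
/- If `i < j`, the vector `eᵢ - eⱼ` has nonnegative mass on every downset (a downset containing
`j` contains `i`) and total mass zero, so it lies in the restricted recession cone unless some
`K ∈ 𝒩` contains `i` but not `j`. Hence, when the cone is `{0}`, every step `cₖ < cₖ₊₁` of a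
chain `c₀ < ⋯ < cₙ` is separated by some `Kₖ ∈ 𝒩`. These `Kₖ` are distinct: for `k < l`,
`cₖ₊₁ ≤ cₗ ∈ Kₗ`, so `Kₗ` contains `cₖ₊₁ ∉ Kₖ`. Thus `|𝒩| ≥ n` for every chain length `n`. -/

open Finset

variable {ι : Type*}

/-- The height `h(N)` of the poset: the maximal length (number of elements minus one)
of a chain in the poset. -/
noncomputable def posetHeight (ι : Type*) [PartialOrder ι] : ℕ :=
  sSup {n | ∃ c : Fin (n + 1) → ι, StrictMono c}

def restrictedRecessionCone [Fintype ι] [PartialOrder ι] (𝒩 : Finset (Finset ι)) :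
    Set (ι → ℝ) :=
  {x | (∀ S : Finset ι, IsDownset S → 0 ≤ ∑ a ∈ S, x a) ∧
    (∑ a, x a) = 0 ∧ ∀ K ∈ 𝒩, ∑ a ∈ K, x a = 0}

lemma sum_single_sub_single [DecidableEq ι] (S : Finset ι) (i j : ι) :
    ∑ a ∈ S, (Pi.single i 1 - Pi.single j 1 : ι → ℝ) a =
      (if i ∈ S then 1 else 0) - (if j ∈ S then 1 else 0) := by
  simp [Finset.sum_sub_distrib, Pi.single_apply]

lemma IsDownset.mem_of_le [PartialOrder ι] {S : Finset ι} (hS : IsDownset S) {i j : ι}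
    (hij : i ≤ j) (hj : j ∈ S) : i ∈ S :=
  hS hj hij

lemma single_sub_single_mem_restrictedRecessionCone [Fintype ι] [DecidableEq ι] [PartialOrder ι]
    {𝒩 : Finset (Finset ι)} (h𝒩 : ∀ K ∈ 𝒩, IsDownset K) {i j : ι} (hij : i ≤ j)
    (hsep : ∀ K ∈ 𝒩, i ∈ K → j ∈ K) :
    Pi.single i 1 - Pi.single j 1 ∈ restrictedRecessionCone 𝒩 := by
  refine ⟨fun S hS => ?_, by simp, fun K hK => ?_⟩
  · rw [sum_single_sub_single]
    by_cases hj : j ∈ S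
    · simp [hj, hS.mem_of_le hij hj]
    · by_cases hi : i ∈ S <;> simp [hi, hj]
  · rw [sum_single_sub_single]
    by_cases hi : i ∈ K
    · simp [hi, hsep K hK hi]
    · have hj : j ∉ K := fun hj => hi ((h𝒩 K hK).mem_of_le hij hj)
      simp [hi, hj]

lemma exists_separating_of_restrictedRecessionCone_eq_zero [Fintype ι] [PartialOrder ι]
    {𝒩 : Finset (Finset ι)} (h𝒩 : ∀ K ∈ 𝒩, IsDownset K)
    (hcone : restrictedRecessionCone 𝒩 = {0}) {i j : ι} (hij : i < j) :
    ∃ K ∈ 𝒩, i ∈ K ∧ j ∉ K := by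
  classical
  by_contra! hsep
  have hmem := single_sub_single_mem_restrictedRecessionCone h𝒩 hij.le hsep
  rw [hcone, Set.mem_singleton_iff] at hmem
  have := congrFun hmem i
  simp [hij.ne] at this

lemma injective_of_separates_chain [PartialOrder ι] {n : ℕ} {c : Fin (n + 1) → ι}
    (hc : Monotone c) {K : Fin n → Finset ι} (hK : ∀ k, IsDownset (K k))
    (hlow : ∀ k, c k.castSucc ∈ K k) (hhigh : ∀ k, c k.succ ∉ K k) :
    Function.Injective K := by
  have separated : ∀ k l, k < l → K k ≠ K l := fun k l hkl hKkl =>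
    hhigh k <| (hK k).mem_of_le (hc (Fin.succ_le_castSucc_iff.mpr hkl)) (hKkl ▸ hlow l)
  intro k l hkl
  by_contra hne
  rcases lt_or_gt_of_ne hne with h | h
  · exact separated k l h hkl
  · exact separated l k h hkl.symm

/-- if the downsets `K ∈ 𝒩` (all ≠ `N`) are such that the restricted recession
cone `{x : x(S) ≥ 0 ∀ S ∈ O(N), x(N) = 0, x(K) = 0 ∀ K ∈ 𝒩}` equals `{0}`,
then `𝒩` has at least `h(N)` members. -/
theorem normalCollection_card_ge_height
    [Fintype ι] [PartialOrder ι] (𝒩 : Finset (Finset ι))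
    (h𝒩 : ∀ K ∈ 𝒩, IsDownset K ∧ K ≠ Finset.univ)
    (hkill : {x : ι → ℝ | (∀ S : Finset ι, IsDownset S → 0 ≤ ∑ a ∈ S, x a) ∧
        (∑ a, x a) = 0 ∧ ∀ K ∈ 𝒩, ∑ a ∈ K, x a = 0} = {0}) :
    posetHeight ι ≤ 𝒩.card := by
  have hdown : ∀ K ∈ 𝒩, IsDownset K := fun K hK => (h𝒩 K hK).1
  refine csSup_le' ?_
  rintro n ⟨c, hc⟩
  choose K hK𝒩 hlow hhigh using fun k : Fin n =>
    exists_separating_of_restrictedRecessionCone_eq_zero hdown hkill (hc k.castSucc_lt_succ)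
  have hinj : Function.Injective K :=
    injective_of_separates_chain hc.monotone (fun k => hdown _ (hK𝒩 k)) hlow hhigh
  simpa using Fintype.card_le_of_injective (fun k => (⟨K k, hK𝒩 k⟩ : 𝒩))
    fun k l hkl => hinj (congrArg Subtype.val hkl)
end

section
/- Let ≤ be a partial order on the finite player set N with height q := h(N) ≥ 1, and for k = 1, …, q set D_k = {i ∈ N : h(i) ≤ k − 1}. Then each D_k is a downset, D_1 ⊊ D_2 ⊊ ⋯ ⊊ D_q ⊊ N, and {x ∈ ℝ^N : x(S) ≥ 0 for all S ∈ O(N), x(N) = 0, and x(D_k) = 0 for k = 1, …, q} = {0}. In particular, there exists a nested normal collection of downsets of cardinality exactly h(N). -/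
/-! The height function is strictly monotone (it is Mathlib's `Order.height`), so each `D_k` is
a downset, and every height `0, …, h(N)` is attained, since along a maximal chain the height of
an element is its index; this makes `D_1 ⊊ ⋯ ⊊ D_q ⊊ N` strict. For normality, induct on the
height: once `x` vanishes below height `m`, every `i` of height `m` has `x_i = x(↓i) ≥ 0`, while
`x(D_{m+1}) = 0` (or `x(N) = 0` when `m = q`) says that these `x_i` sum to zero. -/

open Finset

variable {ι : Type*}

/-- The height `h(i)` of an element `i`: the maximal length of a chain ending at `i`
(in a finite poset this is the maximal length of a chain from a minimal element to `i`). -/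
noncomputable def heightOf [PartialOrder ι] (i : ι) : ℕ :=
  sSup {n | ∃ c : Fin (n + 1) → ι, StrictMono c ∧ c (Fin.last n) = i}

section Height

variable [PartialOrder ι]

lemma strictMono_fin_one (c : Fin (0 + 1) → ι) : StrictMono c :=
  Fin.strictMono_iff_lt_succ.mpr fun k => k.elim0

lemma nonempty_of_posetHeight_ne_zero (h : posetHeight ι ≠ 0) : Nonempty ι := by
  by_contra hι
  rw [not_nonempty_iff] at hι
  simp [posetHeight] at h

variable [Fintype ι]

lemma bddAbove_chainLengths : BddAbove {n | ∃ c : Fin (n + 1) → ι, StrictMono c} :=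
  ⟨Fintype.card ι, fun n ⟨c, hc⟩ => by
    have := Fintype.card_le_of_injective c hc.injective
    simp only [Fintype.card_fin] at this
    omega⟩

lemma bddAbove_chainLengths_last (i : ι) :
    BddAbove {n | ∃ c : Fin (n + 1) → ι, StrictMono c ∧ c (Fin.last n) = i} :=
  bddAbove_chainLengths.mono fun _ ⟨c, hc, _⟩ => by exact ⟨c, hc⟩

lemma le_heightOf {n : ℕ} {i : ι} {c : Fin (n + 1) → ι} (hc : StrictMono c)
    (hci : c (Fin.last n) = i) : n ≤ heightOf i :=
  le_csSup (bddAbove_chainLengths_last i) ⟨c, hc, hci⟩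

lemma exists_strictMono_last_eq_heightOf (i : ι) :
    ∃ c : Fin (heightOf i + 1) → ι, StrictMono c ∧ c (Fin.last _) = i :=
  Nat.sSup_mem ⟨0, by exact ⟨fun _ => i, strictMono_fin_one _, rfl⟩⟩
    (bddAbove_chainLengths_last i)

theorem coe_heightOf (i : ι) : (heightOf i : ℕ∞) = Order.height i := by
  refine le_antisymm ?_ (Order.height_le fun p hp => by exact_mod_cast le_heightOf p.strictMono hp)
  obtain ⟨c, hc, hci⟩ := exists_strictMono_last_eq_heightOf i
  have := Order.length_le_height_last (p := LTSeries.mk _ c hc)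
  rwa [show (LTSeries.mk _ c hc).last = i from hci] at this

theorem heightOf_strictMono : StrictMono (heightOf : ι → ℕ) := fun a b hab => by
  have := Order.height_add_one_le hab
  rw [← coe_heightOf, ← coe_heightOf] at this
  exact_mod_cast this

lemma heightOf_le_posetHeight (i : ι) : heightOf i ≤ posetHeight ι :=
  let ⟨c, hc, _⟩ := exists_strictMono_last_eq_heightOf i
  le_csSup bddAbove_chainLengths ⟨c, hc⟩

lemma exists_heightOf_eq_posetHeight [Nonempty ι] : ∃ i : ι, heightOf i = posetHeight ι := by
  obtain ⟨c, hc⟩ : posetHeight ι ∈ {n | ∃ c : Fin (n + 1) → ι, StrictMono c} :=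
    Nat.sSup_mem ⟨0, fun _ => Classical.arbitrary ι, strictMono_fin_one _⟩
      bddAbove_chainLengths
  exact ⟨c (Fin.last _), (heightOf_le_posetHeight _).antisymm (le_heightOf hc rfl)⟩

theorem exists_heightOf_eq [Nonempty ι] {m : ℕ} (hm : m ≤ posetHeight ι) :
    ∃ i : ι, heightOf i = m := by
  obtain ⟨a, ha⟩ := exists_heightOf_eq_posetHeight (ι := ι)
  have hmax : (posetHeight ι : ℕ∞) = Order.height a := by rw [← ha, coe_heightOf]
  obtain ⟨p, hlast, hlen⟩ := Order.exists_series_of_le_height a hmax.le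
  have hidx := Order.height_eq_index_of_length_eq_height_last (p := p)
    (by rw [hlen, hlast, hmax]) ⟨m, by omega⟩
  rw [← coe_heightOf] at hidx
  exact ⟨_, by exact_mod_cast hidx⟩

lemma isDownset_filter_le [DecidableLE ι] (i : ι) : IsDownset ({j | j ≤ i} : Finset ι) :=
  fun _ hk _ hjk => by simp only [mem_filter, mem_univ, true_and] at hk ⊢; exact hjk.trans hk

end Height

section Grading

variable {M : Type*} [AddCommMonoid M] [Fintype ι] {f : ι → ℕ} {x : ι → M}

lemma sum_filter_le_eq_sum_filter_eq {m : ℕ} (hlow : ∀ j, f j < m → x j = 0) :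
    ∑ j with f j ≤ m, x j = ∑ j with f j = m, x j :=
  (sum_subset (fun j hj => by simp only [mem_filter, mem_univ, true_and] at hj ⊢; omega)
    fun j hj hjm => hlow j <| by simp only [mem_filter, mem_univ, true_and] at hj hjm; omega).symm

variable [PartialOrder ι] [DecidableLE ι]

lemma sum_filter_le_eq_self (hf : StrictMono f) {i : ι} (hlow : ∀ j, f j < f i → x j = 0) :
    ∑ j with j ≤ i, x j = x i :=
  sum_eq_single_of_mem i (by simp) fun j hj hji =>
    hlow j (hf (lt_of_le_of_ne (by simpa using hj) hji))

theorem eq_zero_of_sum_filter_le_nonneg_of_sum_sublevel_eq_zero [PartialOrder M] [AddLeftMono M]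
    (hf : StrictMono f) (hIic : ∀ i, 0 ≤ ∑ j with j ≤ i, x j)
    (hsub : ∀ m, ∑ j with f j ≤ m, x j = 0) : x = 0 := by
  have hlevel : ∀ m, (∀ j, f j < m → x j = 0) → ∀ i, f i = m → x i = 0 := by
    intro m hlow
    have hnonneg : ∀ i ∈ ({j | f j = m} : Finset ι), 0 ≤ x i := fun i hi => by
      simp only [mem_filter, mem_univ, true_and] at hi
      simpa [sum_filter_le_eq_self hf (hi ▸ hlow)] using hIic i
    have hzero := (sum_filter_le_eq_sum_filter_eq hlow).symm.trans (hsub m)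
    exact fun i hi => (sum_eq_zero_iff_of_nonneg hnonneg).mp hzero i (by simpa using hi)
  have hbelow : ∀ m j, f j < m → x j = 0 := by
    intro m
    induction m with
    | zero => simp
    | succ m ih =>
      intro j hj
      rcases Nat.lt_succ_iff_lt_or_eq.mp hj with hj | hj
      exacts [ih j hj, hlevel m ih j hj]
  exact funext fun i => hbelow _ i (Nat.lt_succ_self _)

end Grading

/-- with `q = h(N) ≥ 1` and `D_k = {i : h(i) ≤ k - 1}` for `k = 1, …, q`,
each `D_k` is a downset, `D_1 ⊊ ⋯ ⊊ D_q ⊊ N`, and adding the equalities `x(D_k) = 0`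
to the recession cone of `O(N)` reduces it to `{0}`: there is a nested normal
collection of downsets of cardinality exactly `h(N)`. -/
theorem levels_form_nested_normal_collection
    [Fintype ι] [PartialOrder ι]
    (hq : 1 ≤ posetHeight ι) (D : ℕ → Finset ι)
    (hD : ∀ k, 1 ≤ k → k ≤ posetHeight ι → ∀ i : ι, i ∈ D k ↔ heightOf i ≤ k - 1) :
    (∀ k, 1 ≤ k → k ≤ posetHeight ι → IsDownset (D k)) ∧
    (∀ k, 1 ≤ k → k < posetHeight ι → D k ⊂ D (k + 1)) ∧
    D (posetHeight ι) ⊂ Finset.univ ∧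
    {x : ι → ℝ | (∀ S : Finset ι, IsDownset S → 0 ≤ ∑ a ∈ S, x a) ∧
        (∑ a, x a) = 0 ∧ ∀ k, 1 ≤ k → k ≤ posetHeight ι → ∑ a ∈ D k, x a = 0} = {0} := by
  classical
  have : Nonempty ι := nonempty_of_posetHeight_ne_zero (by omega)
  have hD' : ∀ k, 1 ≤ k → k ≤ posetHeight ι → D k = ({i | heightOf i ≤ k - 1} : Finset ι) :=
    fun k hk1 hk2 => by ext i; simp [hD k hk1 hk2]
  refine ⟨fun k hk1 hk2 i hi j hji => ?_, fun k hk1 hk2 => ?_, ?_, ?_⟩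
  · rw [hD k hk1 hk2] at hi ⊢
    exact (heightOf_strictMono.monotone hji).trans hi
  · obtain ⟨i, hi⟩ := exists_heightOf_eq hk2.le
    rw [hD' k hk1 hk2.le, hD' (k + 1) (by omega) hk2]
    refine (ssubset_iff_of_subset fun j hj => ?_).mpr ⟨i, by simp [hi], by simp [hi]; omega⟩
    simp only [mem_filter, mem_univ, true_and] at hj ⊢
    omega
  · obtain ⟨i, hi⟩ := exists_heightOf_eq_posetHeight (ι := ι)
    refine ssubset_univ_iff.mpr fun h => ?_
    have := (hD _ hq le_rfl i).mp (h ▸ mem_univ i)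
    omega
  · ext x
    refine ⟨fun ⟨hdown, hN, hk⟩ => ?_, by rintro rfl; simp⟩
    refine eq_zero_of_sum_filter_le_nonneg_of_sum_sublevel_eq_zero heightOf_strictMono
      (fun i => hdown _ (isDownset_filter_le i)) fun m => ?_
    rcases lt_or_ge m (posetHeight ι) with hm | hm
    · simpa [hD' (m + 1) (by omega) hm] using hk (m + 1) (by omega) hm
    · rwa [filter_true_of_mem fun j _ => (heightOf_le_posetHeight j).trans hm]
end

section
/- Let ≤ be a partial order on the finite player set N and let 𝒩 = {N_1, …, N_q} be a nested normal collection of downsets. Then for every game v on O(N), the restricted core is contained in the restricted Weber set: C_𝒩(v) ⊆ W_𝒩(v). -/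
open Finset

variable {ι : Type*}

/-- A maximal chain `∅ = S_0 ⊊ S_1 ⊊ ⋯ ⊊ S_n = N` in `O(N)` (the collection of downsets),
with `|S_k| = k`, encoded as an increasing `ℕ`-indexed family of downsets with
`(S k).card = k` for `k ≤ n`. -/
def MaximalChain [Fintype ι] [PartialOrder ι] (S : ℕ → Finset ι) : Prop :=
  (∀ k, IsDownset (S k)) ∧ (∀ k, S k ⊆ S (k + 1)) ∧
    ∀ k ≤ Fintype.card ι, (S k).card = k

/-- The marginal vector `x^C` of the chain `C = (S_k)_k` for the game `v`:
`x^C_i = v(S_k) - v(S_{k-1})` where `k` is the first index with `i ∈ S_k`. -/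
noncomputable def marginal (v : Finset ι → ℝ) (S : ℕ → Finset ι) (i : ι) : ℝ :=
  v (S (sInf {k | i ∈ S k})) - v (S (sInf {k | i ∈ S k} - 1))

/-- The core of a game `v` on `O(N)`. -/
def core [Fintype ι] [PartialOrder ι] (v : Finset ι → ℝ) : Set (ι → ℝ) :=
  {x | (∀ S : Finset ι, IsDownset S → v S ≤ ∑ a ∈ S, x a) ∧ ∑ a, x a = v Finset.univ}

/-- `𝒩` is a collection of downsets, all different from `N`. -/
def DownsetCollection [Fintype ι] [PartialOrder ι] (𝒩 : Finset (Finset ι)) : Prop :=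
  ∀ A ∈ 𝒩, IsDownset A ∧ A ≠ Finset.univ

/-- `𝒩` is a normal collection: turning the core inequalities indexed by `𝒩` into
equalities makes the recession cone reduce to `{0}`. -/
def NormalCollection [Fintype ι] [PartialOrder ι] (𝒩 : Finset (Finset ι)) : Prop :=
  DownsetCollection 𝒩 ∧
    {x : ι → ℝ | (∀ S : Finset ι, IsDownset S → 0 ≤ ∑ a ∈ S, x a) ∧
      (∑ a, x a) = 0 ∧ ∀ A ∈ 𝒩, ∑ a ∈ A, x a = 0} = {0}

/-- `𝒩` is nested: it is a chain under inclusion. -/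
def Nested (𝒩 : Finset (Finset ι)) : Prop :=
  ∀ A ∈ 𝒩, ∀ B ∈ 𝒩, A ⊆ B ∨ B ⊆ A

/-- The restricted core `C_𝒩(v)`: elements of the core satisfying `x(A) = v(A)` for `A ∈ 𝒩`. -/
def restrictedCore [Fintype ι] [PartialOrder ι] (𝒩 : Finset (Finset ι))
    (v : Finset ι → ℝ) : Set (ι → ℝ) :=
  {x ∈ core v | ∀ A ∈ 𝒩, ∑ a ∈ A, x a = v A}

/-- A restricted maximal chain: a maximal chain in `O(N)` passing through every `A ∈ 𝒩`. -/
def RestrictedChain [Fintype ι] [PartialOrder ι] (𝒩 : Finset (Finset ι))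
    (S : ℕ → Finset ι) : Prop :=
  MaximalChain S ∧ ∀ A ∈ 𝒩, ∃ k, S k = A

/-- The restricted Weber set `W_𝒩(v)`: the convex hull of the marginal vectors of all
restricted maximal chains. -/
def restrictedWeber [Fintype ι] [PartialOrder ι] (𝒩 : Finset (Finset ι))
    (v : Finset ι → ℝ) : Set (ι → ℝ) :=
  convexHull ℝ {x | ∃ S : ℕ → Finset ι, RestrictedChain 𝒩 S ∧ x = marginal v S}

/-!
Given weights `y`, list the players layer by layer along the nested collection, and inside a
layer by decreasing weight. Normality makes every layer an antichain, so this list is a linear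
extension of `≤`, and its prefixes form a restricted maximal chain `S`. For `x` in the restricted
core the excesses `X k = x(S k) - v(S k)` are nonnegative and vanish at `∅`, at `N` and at every
`N_k`, so Abel summation writes `⟨x - x^S, y⟩` as a sum of terms `(y_k - y_{k+1}) X (k + 1)`, each
nonnegative: either the `k`-th and `(k+1)`-st players lie in one layer and are sorted by weight,
or `S (k + 1)` belongs to `𝒩`. So no linear functional separates `x` from the finitely many
marginal vectors, and Hahn–Banach puts `x` in their convex hull.
-/

theorem NormalCollection.exists_mem_notMem_of_lt [Fintype ι] [PartialOrder ι] [DecidableEq ι]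
    {𝒩 : Finset (Finset ι)} (hnormal : NormalCollection 𝒩)
    {i j : ι} (hji : j < i) : ∃ A ∈ 𝒩, j ∈ A ∧ i ∉ A := by
  by_contra! hsep
  set z : ι → ℝ := Pi.single j 1 - Pi.single i 1
  have hz : ∀ S : Finset ι, ∑ a ∈ S, z a = (if j ∈ S then 1 else 0) - (if i ∈ S then 1 else 0) :=
    fun S => by simp only [z, Pi.sub_apply, Finset.sum_sub_distrib, Finset.sum_pi_single']
  have hz0 : z ∈ ({0} : Set (ι → ℝ)) := by
    rw [← hnormal.2]
    refine ⟨fun S hS => ?_, ?_, fun A hA => ?_⟩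
    · by_cases hiS : i ∈ S
      · simp [hz, hiS, hS hiS hji.le]
      · by_cases hjS : j ∈ S <;> simp [hz, hiS, hjS]
    · simp [hz]
    · by_cases hjA : j ∈ A
      · simp [hz, hjA, hsep A hA hjA]
      · have hiA : i ∉ A := fun hiA => hjA ((hnormal.1 A hA).1 hiA hji.le)
        simp [hz, hjA, hiA]
  have : z j = 1 := by simp [z, hji.ne]
  simp_all

section LayerIndex

variable (𝒩 : Finset (Finset ι)) [DecidableEq ι]

/-- For nested `𝒩` this numbers the layers `N_k \ N_{k-1}` from the bottom. -/
def layerIndex (i : ι) : ℕ := #{A ∈ 𝒩 | i ∉ A}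

variable {𝒩}

theorem layerIndex_lt_of_forall_notMem {i j : ι} (hij : ∀ B ∈ 𝒩, i ∉ B → j ∉ B)
    {A : Finset ι} (hA : A ∈ 𝒩) (hiA : i ∈ A) (hjA : j ∉ A) :
    layerIndex 𝒩 i < layerIndex 𝒩 j := by
  refine Finset.card_lt_card ⟨fun B hB => ?_, fun hsub => ?_⟩
  · simp only [Finset.mem_filter] at hB ⊢
    exact ⟨hB.1, hij B hB.1 hB.2⟩
  · simpa [hiA] using hsub (Finset.mem_filter.2 ⟨hA, hjA⟩)

theorem exists_mem_notMem_of_layerIndex_lt {i j : ι} (h : layerIndex 𝒩 i < layerIndex 𝒩 j) :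
    ∃ A ∈ 𝒩, i ∈ A ∧ j ∉ A := by
  by_contra! hsep
  refine h.not_ge (Finset.card_le_card fun B hB => ?_)
  simp only [Finset.mem_filter] at hB ⊢
  exact ⟨hB.1, fun hiB => hB.2 (hsep B hB.1 hiB)⟩

theorem layerIndex_lt_of_lt [Fintype ι] [PartialOrder ι] (hnormal : NormalCollection 𝒩)
    {i j : ι} (hji : j < i) : layerIndex 𝒩 j < layerIndex 𝒩 i := by
  obtain ⟨A, hA, hjA, hiA⟩ := hnormal.exists_mem_notMem_of_lt hji
  exact layerIndex_lt_of_forall_notMem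
    (fun B hB hjB hiB => hjB ((hnormal.1 B hB).1 hiB hji.le)) hA hjA hiA

theorem layerIndex_lt_of_mem_of_notMem (hnested : Nested 𝒩) {A : Finset ι} (hA : A ∈ 𝒩)
    {i j : ι} (hiA : i ∈ A) (hjA : j ∉ A) : layerIndex 𝒩 i < layerIndex 𝒩 j :=
  layerIndex_lt_of_forall_notMem
    (fun B hB hiB hjB => (hnested A hA B hB).elim (fun h => hiB (h hiA)) (fun h => hjA (h hjB)))
    hA hiA hjA

end LayerIndex

theorem exists_equiv_fin_monotone [Fintype ι] {α : Type*} [LinearOrder α] (f : ι → α) :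
    ∃ e : Fin (Fintype.card ι) ≃ ι, Monotone (f ∘ e) :=
  ⟨(Tuple.sort (f ∘ (Fintype.equivFin ι).symm)).trans (Fintype.equivFin ι).symm,
    Tuple.monotone_sort (f ∘ (Fintype.equivFin ι).symm)⟩

section PrefixChain

variable [Fintype ι] (σ : ι ≃ Fin (Fintype.card ι))

def prefixChain (k : ℕ) : Finset ι := {i | (σ i : ℕ) < k}

variable {σ}

theorem mem_prefixChain {i : ι} {k : ℕ} : i ∈ prefixChain σ k ↔ (σ i : ℕ) < k := by
  simp [prefixChain]

theorem card_prefixChain {k : ℕ} (hk : k ≤ Fintype.card ι) : #(prefixChain σ k) = k := by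
  rw [Finset.card_equiv σ (t := {m : Fin (Fintype.card ι) | (m : ℕ) < k}) (by simp [prefixChain]),
    Fin.card_filter_val_lt, min_eq_right hk]

theorem prefixChain_card_eq {A : Finset ι} (hA : ∀ i ∈ A, ∀ j ∉ A, σ i < σ j) :
    prefixChain σ #A = A := by
  have hcard : #(prefixChain σ #A) = #A := card_prefixChain (Finset.card_le_univ A)
  by_cases hsub : A ⊆ prefixChain σ #A
  · exact (Finset.eq_of_subset_of_card_le hsub hcard.le).symm
  · obtain ⟨i, hiA, hi⟩ := Finset.not_subset.1 hsub
    refine Finset.eq_of_subset_of_card_le (fun j hj => ?_) hcard.ge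
    by_contra hjA
    have := hA i hiA j hjA
    rw [mem_prefixChain] at hi hj
    omega

theorem prefixChain_eq_of_mem_of_notMem {A : Finset ι} (hA : ∀ i ∈ A, ∀ j ∉ A, σ i < σ j)
    {i j : ι} (hi : i ∈ A) (hj : j ∉ A) (hij : (σ j : ℕ) = σ i + 1) :
    prefixChain σ (σ j) = A := by
  have hA' := prefixChain_card_eq hA
  rw [← hA', mem_prefixChain] at hi hj
  rwa [show (σ j : ℕ) = #A by omega]

theorem sum_prefixChain_succ (x : ι → ℝ) (i : ι) :
    ∑ a ∈ prefixChain σ (σ i + 1), x a = x i + ∑ a ∈ prefixChain σ (σ i), x a := by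
  classical
  have : prefixChain σ (σ i + 1) = insert i (prefixChain σ (σ i)) := by
    ext j
    simp only [mem_prefixChain, Finset.mem_insert, ← σ.injective.eq_iff (a := j), Fin.ext_iff]
    omega
  rw [this, Finset.sum_insert (by simp [mem_prefixChain])]

theorem marginal_prefixChain (v : Finset ι → ℝ) (i : ι) :
    marginal v (prefixChain σ) i = v (prefixChain σ (σ i + 1)) - v (prefixChain σ (σ i)) := by
  have : {k | i ∈ prefixChain σ k} = Set.Ici ((σ i : ℕ) + 1) := by
    ext k
    simp only [Set.mem_ofPred_eq, mem_prefixChain, Set.mem_Ici]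
    omega
  simp only [marginal, this, csInf_Ici, Nat.add_sub_cancel]

theorem restrictedChain_prefixChain [PartialOrder ι] {𝒩 : Finset (Finset ι)} (hmono : Monotone σ)
    (hinit : ∀ A ∈ 𝒩, ∀ i ∈ A, ∀ j ∉ A, σ i < σ j) : RestrictedChain 𝒩 (prefixChain σ) := by
  refine ⟨⟨fun k i hi j hji => ?_, fun k i hi => ?_, fun k hk => card_prefixChain hk⟩,
    fun A hA => ⟨#A, prefixChain_card_eq (hinit A hA)⟩⟩
  · have : σ j ≤ σ i := hmono hji
    rw [mem_prefixChain] at hi ⊢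
    omega
  · rw [mem_prefixChain] at hi ⊢
    omega

end PrefixChain

theorem sum_range_mul_sub_nonneg {g X : ℕ → ℝ} {n : ℕ} (h0 : X 0 = 0) (hn : X n = 0)
    (hX : ∀ k, 0 ≤ X k) (hg : ∀ k, k + 1 < n → g (k + 1) ≤ g k ∨ X (k + 1) = 0) :
    0 ≤ ∑ k ∈ range n, g k * (X (k + 1) - X k) := by
  cases n with
  | zero => simp
  | succ n =>
    have hsum : ∑ k ∈ range (n + 1), g k * (X (k + 1) - X k) =
        ∑ k ∈ range n, (g k - g (k + 1)) * X (k + 1) := by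
      simp only [mul_sub, sub_mul, Finset.sum_sub_distrib]
      rw [Finset.sum_range_succ, Finset.sum_range_succ' (fun k => g k * X k), hn, h0]
      ring
    rw [hsum]
    refine Finset.sum_nonneg fun k hk => ?_
    rcases hg k (by simpa using hk) with h | h
    · exact mul_nonneg (sub_nonneg.2 h) (hX _)
    · simp [h]

theorem sum_mul_sub_nonneg_of_equiv [Fintype ι] {n : ℕ} (σ : ι ≃ Fin n) (y : ι → ℝ) {X : ℕ → ℝ}
    (h0 : X 0 = 0) (hn : X n = 0) (hX : ∀ k, 0 ≤ X k)
    (hy : ∀ i j, (σ j : ℕ) = σ i + 1 → y j ≤ y i ∨ X (σ j) = 0) :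
    0 ≤ ∑ i, y i * (X (σ i + 1) - X (σ i)) := by
  set g : ℕ → ℝ := fun k => if hk : k < n then y (σ.symm ⟨k, hk⟩) else 0
  calc 0 ≤ ∑ k ∈ range n, g k * (X (k + 1) - X k) :=
        sum_range_mul_sub_nonneg h0 hn hX fun k hk => by
          simpa [g, hk, (by omega : k < n)] using
            hy (σ.symm ⟨k, by omega⟩) (σ.symm ⟨k + 1, hk⟩) (by simp)
    _ = ∑ i, y i * (X (σ i + 1) - X (σ i)) := by
      rw [← Fin.sum_univ_eq_sum_range, ← σ.sum_comp]
      simp [g]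

theorem mem_convexHull_of_forall_exists_dotProduct_le [Fintype ι] {M : Set (ι → ℝ)}
    (hM : M.Finite) {x : ι → ℝ} (h : ∀ y : ι → ℝ, ∃ m ∈ M, m ⬝ᵥ y ≤ x ⬝ᵥ y) :
    x ∈ convexHull ℝ M := by
  classical
  by_contra hx
  obtain ⟨f, u, hfx, hfM⟩ := geometric_hahn_banach_point_closed (convex_convexHull ℝ M)
    (hM.isCompact_convexHull ℝ).isClosed hx
  have hf : ∀ z, f z = z ⬝ᵥ fun i => f fun j => if i = j then 1 else 0 :=
    (f : (ι → ℝ) →ₗ[ℝ] ℝ).pi_apply_eq_sum_univ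
  obtain ⟨m, hm, hle⟩ := h fun i => f fun j => if i = j then 1 else 0
  have := hfM m (subset_convexHull ℝ M hm)
  rw [hf] at hfx this
  linarith

theorem finite_range_marginal [Finite ι] (v : Finset ι → ℝ) :
    (Set.range (marginal v)).Finite :=
  (Set.Finite.pi' fun _ => Set.finite_range fun p : Finset ι × Finset ι => v p.1 - v p.2).subset
    (Set.range_subset_iff.2 fun _ _ => ⟨(_, _), rfl⟩)

theorem exists_restrictedChain_marginal_dotProduct_le [Fintype ι] [PartialOrder ι]
    {𝒩 : Finset (Finset ι)} (hnormal : NormalCollection 𝒩) (hnested : Nested 𝒩)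
    {v : Finset ι → ℝ} (hv : v ∅ = 0) (y : ι → ℝ) :
    ∃ S, RestrictedChain 𝒩 S ∧ ∀ x ∈ restrictedCore 𝒩 v, marginal v S ⬝ᵥ y ≤ x ⬝ᵥ y := by
  classical
  obtain ⟨e, he⟩ :=
    exists_equiv_fin_monotone fun i => toLex (layerIndex 𝒩 i, OrderDual.toDual (y i))
  set σ := e.symm
  have hlayer : ∀ i j, layerIndex 𝒩 i < layerIndex 𝒩 j → σ i < σ j := fun i j h =>
    he.reflect_lt (by simpa [σ, Prod.Lex.toLex_lt_toLex] using Or.inl h)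
  have hinit : ∀ A ∈ 𝒩, ∀ i ∈ A, ∀ j ∉ A, σ i < σ j := fun A hA i hi j hj =>
    hlayer i j (layerIndex_lt_of_mem_of_notMem hnested hA hi hj)
  have hmono : Monotone σ := fun j i hji => hji.eq_or_lt.elim (fun h => h ▸ le_rfl)
    fun h => (hlayer j i (layerIndex_lt_of_lt hnormal h)).le
  have hchain := restrictedChain_prefixChain hmono hinit
  refine ⟨_, hchain, fun x ⟨⟨hcore, huniv⟩, hres⟩ => ?_⟩
  set S := prefixChain σ
  set X : ℕ → ℝ := fun k => ∑ a ∈ S k, x a - v (S k)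
  have hadj : ∀ i j, (σ j : ℕ) = σ i + 1 → y j ≤ y i ∨ X (σ j) = 0 := by
    intro i j hij
    have hle := he (show σ i ≤ σ j from Fin.le_def.2 (by omega))
    simp only [Function.comp_apply, σ, Equiv.apply_symm_apply, Prod.Lex.toLex_le_toLex,
      OrderDual.toDual_le_toDual] at hle
    rcases hle with hlt | ⟨-, hy⟩
    · obtain ⟨A, hA, hiA, hjA⟩ := exists_mem_notMem_of_layerIndex_lt hlt
      simp [X, S, prefixChain_eq_of_mem_of_notMem (hinit A hA) hiA hjA hij, hres A hA]
    · exact Or.inl hy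
  have hsum : ∑ i, y i * (X (σ i + 1) - X (σ i)) = (x - marginal v S) ⬝ᵥ y := by
    simp only [X, sum_prefixChain_succ, S, marginal_prefixChain, dotProduct, Pi.sub_apply]
    exact Finset.sum_congr rfl fun i _ => by ring
  rw [← sub_nonneg, ← sub_dotProduct, ← hsum]
  refine sum_mul_sub_nonneg_of_equiv σ y (by simp [X, S, prefixChain, hv]) ?_
    (fun k => sub_nonneg.2 (hcore _ (hchain.1.1 k))) hadj
  simp [X, S, prefixChain, huniv]

/-- for a nested normal collection `𝒩` and any game `v` on `O(N)`,
the restricted core is contained in the restricted Weber set. -/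
theorem restrictedCore_subset_restrictedWeber
    [Fintype ι] [PartialOrder ι] (𝒩 : Finset (Finset ι))
    (hnormal : NormalCollection 𝒩) (hnested : Nested 𝒩)
    (v : Finset ι → ℝ) (hv : v ∅ = 0) :
    restrictedCore 𝒩 v ⊆ restrictedWeber 𝒩 v := by
  intro x hx
  refine mem_convexHull_of_forall_exists_dotProduct_le
    ((finite_range_marginal v).subset ?_) fun y => ?_
  · rintro _ ⟨S, -, rfl⟩
    exact ⟨S, rfl⟩
  · obtain ⟨S, hS, hle⟩ := exists_restrictedChain_marginal_dotProduct_le hnormal hnested hv y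
    exact ⟨_, ⟨S, hS, rfl⟩, hle x hx⟩
end

section
/- Let F be a weakly union-closed set system on the finite player set N, and let F̃ be its closure under union and intersection. Suppose that every S ∈ F̃ ∖ F is either a union of pairwise disjoint members of F, or there exist S₁, S₂ ∈ F with S = S₁ ∩ S₂ together with a finite family of pairwise disjoint members of F whose union is N ∖ (S₁ ∪ S₂). Then C(0) = C̃(0), i.e., the recession cones (and hence the extremal rays) defined by F and by F̃ coincide. -/
open Finset

variable {ι : Type*}

/-- The closure `F̃` of `F` under (pairwise) union and intersection: the smallest
collection of subsets of `N` containing `F` and closed under union and intersection. -/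
inductive closureUI [DecidableEq ι] (F : Set (Finset ι)) : Finset ι → Prop
  | base {S : Finset ι} : S ∈ F → closureUI F S
  | union {S T : Finset ι} : closureUI F S → closureUI F T → closureUI F (S ∪ T)
  | inter {S T : Finset ι} : closureUI F S → closureUI F T → closureUI F (S ∩ T)

/-- `F` is weakly union-closed: the union of two non-disjoint members of `F` is in `F`. -/
def WeaklyUnionClosed [DecidableEq ι] (F : Set (Finset ι)) : Prop :=
  ∀ S₁ ∈ F, ∀ S₂ ∈ F, (S₁ ∩ S₂).Nonempty → S₁ ∪ S₂ ∈ F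

/-! For `x ∈ C(0)` the inequalities `x(S) ≥ 0`, `S ∈ F̃ \ F`, already follow from those for `F`:
a disjoint union of members of `F` has a sum of nonnegative sums, and since `x(N) = 0`,
inclusion–exclusion gives `x(S₁ ∩ S₂) = x(S₁) + x(S₂) + x(N \ (S₁ ∪ S₂))`. -/

theorem sum_sup_nonneg_of_pairwiseDisjoint {M : Type*} [AddCommMonoid M] [PartialOrder M]
    [IsOrderedAddMonoid M] [DecidableEq ι] {F : Set (Finset ι)} {x : ι → M}
    (hx : ∀ S ∈ F, 0 ≤ ∑ k ∈ S, x k) {T : Finset (Finset ι)} (hTF : ↑T ⊆ F)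
    (hT : (↑T : Set (Finset ι)).PairwiseDisjoint id) :
    0 ≤ ∑ k ∈ T.sup id, x k := by
  rw [sup_eq_biUnion, sum_biUnion hT]
  exact sum_nonneg fun A hA => hx A (hTF hA)

theorem sum_inter_nonneg_of_sum_compl_union_nonneg [Fintype ι] [DecidableEq ι] {x : ι → ℝ}
    (hN : ∑ k, x k = 0) {S₁ S₂ : Finset ι} (h₁ : 0 ≤ ∑ k ∈ S₁, x k) (h₂ : 0 ≤ ∑ k ∈ S₂, x k)
    (hc : 0 ≤ ∑ k ∈ univ \ (S₁ ∪ S₂), x k) :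
    0 ≤ ∑ k ∈ S₁ ∩ S₂, x k := by
  have hsplit : ∑ k ∈ univ \ (S₁ ∪ S₂), x k + ∑ k ∈ S₁ ∪ S₂, x k = 0 := by
    rw [sum_sdiff (subset_univ _), hN]
  have hIE : ∑ k ∈ S₁ ∪ S₂, x k + ∑ k ∈ S₁ ∩ S₂, x k = ∑ k ∈ S₁, x k + ∑ k ∈ S₂, x k :=
    sum_union_inter
  linarith

theorem recCone_anti [Fintype ι] {F G : Set (Finset ι)} (h : F ⊆ G) :
    recCone G ⊆ recCone F :=
  fun _ ⟨hx, hN⟩ => ⟨fun S hS => hx S (h hS), hN⟩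

theorem recCone_eq_recCone_closure_of_weaklyUnionClosed_general
    [Fintype ι] [DecidableEq ι] (F : Set (Finset ι))
    (hcond : ∀ S : Finset ι, closureUI F S → S ∉ F →
      (∃ T : Finset (Finset ι), ↑T ⊆ F ∧
          (↑T : Set (Finset ι)).PairwiseDisjoint id ∧ S = T.sup id) ∨
        (∃ S₁ ∈ F, ∃ S₂ ∈ F, S = S₁ ∩ S₂ ∧
          ∃ T : Finset (Finset ι), ↑T ⊆ F ∧
            (↑T : Set (Finset ι)).PairwiseDisjoint id ∧
            Finset.univ \ (S₁ ∪ S₂) = T.sup id)) :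
    recCone F = recCone {S | closureUI F S} := by
  refine Set.Subset.antisymm ?_ (recCone_anti fun _ => closureUI.base)
  rintro x ⟨hx, hN⟩
  refine ⟨fun S hS => ?_, hN⟩
  by_cases hSF : S ∈ F
  · exact hx S hSF
  rcases hcond S hS hSF with
    ⟨T, hTF, hT, rfl⟩ | ⟨S₁, hS₁, S₂, hS₂, rfl, T, hTF, hT, hcompl⟩
  · exact sum_sup_nonneg_of_pairwiseDisjoint hx hTF hT
  · refine sum_inter_nonneg_of_sum_compl_union_nonneg hN (hx S₁ hS₁) (hx S₂ hS₂) ?_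
    rw [hcompl]
    exact sum_sup_nonneg_of_pairwiseDisjoint hx hTF hT

/-- let `F` be weakly union-closed and suppose every `S ∈ F̃ \ F` is either a
union of pairwise disjoint members of `F`, or an intersection `S₁ ∩ S₂` of members of `F`
such that `N \ (S₁ ∪ S₂)` is a union of pairwise disjoint members of `F`. Then
`C(0) = C̃(0)`. -/
theorem recCone_eq_recCone_closure_of_weaklyUnionClosed
    [Fintype ι] [DecidableEq ι] (F : Set (Finset ι))
    (hbot : ∅ ∈ F) (htop : Finset.univ ∈ F) (hwuc : WeaklyUnionClosed F)
    (hcond : ∀ S : Finset ι, closureUI F S → S ∉ F →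
      (∃ T : Finset (Finset ι), ↑T ⊆ F ∧
          (↑T : Set (Finset ι)).PairwiseDisjoint id ∧ S = T.sup id) ∨
        (∃ S₁ ∈ F, ∃ S₂ ∈ F, S = S₁ ∩ S₂ ∧
          ∃ T : Finset (Finset ι), ↑T ⊆ F ∧
            (↑T : Set (Finset ι)).PairwiseDisjoint id ∧
            Finset.univ \ (S₁ ∪ S₂) = T.sup id)) :
    recCone F = recCone {S | closureUI F S} :=
  recCone_eq_recCone_closure_of_weaklyUnionClosed_general F hcond
end

section
/- Let ≤ be a partial order on the finite player set N, let 𝒩 = {N_1, …, N_q} be a collection of downsets in O(N) ∖ {N} forming a chain under inclusion, and let v be a convex game on O(N). Then every restricted marginal vector (the marginal vector of a maximal chain in O(N) containing every N_k) belongs to the restricted core C_𝒩(v); consequently W_𝒩(v) ⊆ C_𝒩(v). -/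
open Finset

variable {ι : Type*}

/-!
Along a maximal chain `∅ = S_0 ⊊ ⋯ ⊊ S_n = N` the marginal vector telescopes, so
`x(S_k) = v(S_k)` for every set of the chain, in particular for `N` and for every `A ∈ 𝒩`.
For an arbitrary downset `T`, supermodularity of `v` applied to `T ∩ S_{k+1}` and `S_k` shows that
the increments of `v` along `T ∩ S_k` are dominated by those along `S_k`, whence `x(T) ≥ v(T)`.
The restricted core is convex, so it also contains the convex hull `W_𝒩(v)`.
-/

def IsConvexGame [PartialOrder ι] [DecidableEq ι] (v : Finset ι → ℝ) : Prop :=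
  ∀ S T : Finset ι, IsDownset S → IsDownset T → v S + v T ≤ v (S ∪ T) + v (S ∩ T)

section

variable [PartialOrder ι]

theorem IsDownset.inter_s15 [DecidableEq ι] {A B : Finset ι} (hA : IsDownset A) (hB : IsDownset B) :
    IsDownset (A ∩ B) := fun _ hi _ hji =>
  mem_inter.2 ⟨hA (mem_inter.1 hi).1 hji, hB (mem_inter.1 hi).2 hji⟩

variable [Fintype ι]

theorem convex_restrictedCore (𝒩 : Finset (Finset ι)) (v : Finset ι → ℝ) :
    Convex ℝ (restrictedCore 𝒩 v) := by
  rintro x ⟨⟨hxT, hxN⟩, hx𝒩⟩ y ⟨⟨hyT, hyN⟩, hy𝒩⟩ a b ha hb hab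
  have hsum (T : Finset ι) :
      ∑ c ∈ T, (a • x + b • y) c = a * ∑ c ∈ T, x c + b * ∑ c ∈ T, y c := by
    simp only [Pi.add_apply, Pi.smul_apply, smul_eq_mul, sum_add_distrib, mul_sum]
  have hcomb (r : ℝ) : a * r + b * r = r := by rw [← add_mul, hab, one_mul]
  refine ⟨⟨fun T hT => ?_, ?_⟩, fun A hA => ?_⟩
  · rw [hsum, ← hcomb (v T)]
    exact add_le_add (mul_le_mul_of_nonneg_left (hxT T hT) ha)
      (mul_le_mul_of_nonneg_left (hyT T hT) hb)
  · rw [hsum, hxN, hyN, hcomb]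
  · rw [hsum, hx𝒩 A hA, hy𝒩 A hA, hcomb]

namespace MaximalChain

variable {S : ℕ → Finset ι}

theorem monotone (hS : MaximalChain S) : Monotone S :=
  monotone_nat_of_le_succ hS.2.1

theorem apply_zero (hS : MaximalChain S) : S 0 = ∅ :=
  card_eq_zero.1 (hS.2.2 0 (Nat.zero_le _))

theorem apply_eq_univ (hS : MaximalChain S) {k : ℕ} (hk : Fintype.card ι ≤ k) :
    S k = univ :=
  univ_subset_iff.1 <| eq_univ_of_card _ (hS.2.2 _ le_rfl) ▸ hS.monotone hk

variable [DecidableEq ι]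

theorem succ_eq_or_exists_insert (hS : MaximalChain S) (k : ℕ) :
    S (k + 1) = S k ∨ ∃ i ∉ S k, S (k + 1) = insert i (S k) := by
  rcases lt_or_ge k (Fintype.card ι) with hk | hk
  · obtain ⟨i, hi, hins⟩ := exists_eq_insert_iff.2
      ⟨hS.2.1 k, by rw [hS.2.2 k hk.le, hS.2.2 (k + 1) hk]⟩
    exact Or.inr ⟨i, hi, hins.symm⟩
  · exact Or.inl <| by rw [hS.apply_eq_univ hk, hS.apply_eq_univ (hk.trans k.le_succ)]

theorem marginal_eq (v : Finset ι → ℝ) (hS : MaximalChain S) {k : ℕ} {i : ι}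
    (hi : i ∉ S k) (hins : S (k + 1) = insert i (S k)) :
    marginal v S i = v (S (k + 1)) - v (S k) := by
  have hmem : i ∈ S (k + 1) := hins ▸ mem_insert_self i _
  have hentry : sInf {m | i ∈ S m} = k + 1 := by
    refine le_antisymm (Nat.sInf_le hmem) (le_csInf ⟨k + 1, hmem⟩ fun m hm => ?_)
    by_contra! hmk
    exact hi (hS.monotone (Nat.lt_succ_iff.1 hmk) hm)
  rw [marginal, hentry, Nat.add_sub_cancel]

theorem sum_marginal (hS : MaximalChain S) {v : Finset ι → ℝ} (hv : v ∅ = 0) (k : ℕ) :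
    ∑ a ∈ S k, marginal v S a = v (S k) := by
  induction k with
  | zero => simp [hS.apply_zero, hv]
  | succ k ih =>
    rcases hS.succ_eq_or_exists_insert k with hstay | ⟨i, hi, hins⟩
    · rwa [hstay]
    · rw [hins, sum_insert hi, hS.marginal_eq v hi hins, ih, ← hins]
      ring

theorem le_sum_marginal_inter (hS : MaximalChain S) {v : Finset ι → ℝ} (hv : v ∅ = 0)
    (hconv : IsConvexGame v) {T : Finset ι} (hT : IsDownset T) (k : ℕ) :
    v (T ∩ S k) ≤ ∑ a ∈ T ∩ S k, marginal v S a := by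
  induction k with
  | zero => simp [hS.apply_zero, hv]
  | succ k ih =>
    rcases hS.succ_eq_or_exists_insert k with hstay | ⟨i, hi, hins⟩
    · rwa [hstay]
    by_cases hiT : i ∈ T
    · have hstep : T ∩ S (k + 1) = insert i (T ∩ S k) := by rw [hins, inter_insert_of_mem hiT]
      have hunion : T ∩ S (k + 1) ∪ S k = S (k + 1) := by
        rw [hstep, hins, insert_union, union_eq_right.2 inter_subset_right]
      have hinter : T ∩ S (k + 1) ∩ S k = T ∩ S k := by
        rw [inter_assoc, inter_eq_right.2 (hS.2.1 k)]
      have hsuper := hconv _ _ (hT.inter_s15 (hS.1 (k + 1))) (hS.1 k)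
      rw [hunion, hinter] at hsuper
      rw [hstep, sum_insert fun h => hi (mem_inter.1 h).2, hS.marginal_eq v hi hins, ← hstep]
      linarith
    · rwa [hins, inter_insert_of_notMem hiT]

theorem marginal_mem_core (hS : MaximalChain S) {v : Finset ι → ℝ} (hv : v ∅ = 0)
    (hconv : IsConvexGame v) : marginal v S ∈ core v := by
  have htop := hS.apply_eq_univ le_rfl
  refine ⟨fun T hT => ?_, htop ▸ hS.sum_marginal hv _⟩
  simpa [htop] using hS.le_sum_marginal_inter hv hconv hT (Fintype.card ι)

end MaximalChain

theorem RestrictedChain.marginal_mem_restrictedCore [DecidableEq ι] {𝒩 : Finset (Finset ι)}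
    {S : ℕ → Finset ι} (hS : RestrictedChain 𝒩 S) {v : Finset ι → ℝ} (hv : v ∅ = 0)
    (hconv : IsConvexGame v) : marginal v S ∈ restrictedCore 𝒩 v := by
  refine ⟨hS.1.marginal_mem_core hv hconv, fun A hA => ?_⟩
  obtain ⟨k, rfl⟩ := hS.2 A hA
  exact hS.1.sum_marginal hv k

end

theorem restrictedMarginal_mem_restrictedCore_of_convex_general
    [Fintype ι] [DecidableEq ι] [PartialOrder ι] (𝒩 : Finset (Finset ι))
    (v : Finset ι → ℝ) (hv : v ∅ = 0)
    (hconv : ∀ S T : Finset ι, IsDownset S → IsDownset T →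
      v S + v T ≤ v (S ∪ T) + v (S ∩ T)) :
    (∀ S : ℕ → Finset ι, RestrictedChain 𝒩 S → marginal v S ∈ restrictedCore 𝒩 v) ∧
      restrictedWeber 𝒩 v ⊆ restrictedCore 𝒩 v := by
  have hmarginal (S : ℕ → Finset ι) (hS : RestrictedChain 𝒩 S) :
      marginal v S ∈ restrictedCore 𝒩 v :=
    hS.marginal_mem_restrictedCore hv hconv
  refine ⟨hmarginal, convexHull_min ?_ (convex_restrictedCore 𝒩 v)⟩
  rintro _ ⟨S, hS, rfl⟩
  exact hmarginal S hS

/-- if `𝒩` is a nested collection of downsets (all ≠ `N`) and `v` is a convex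
game on `O(N)`, then every restricted marginal vector belongs to the restricted core;
consequently `W_𝒩(v) ⊆ C_𝒩(v)`. -/
theorem restrictedMarginal_mem_restrictedCore_of_convex
    [Fintype ι] [DecidableEq ι] [PartialOrder ι] (𝒩 : Finset (Finset ι))
    (hdown : DownsetCollection 𝒩) (hnested : Nested 𝒩)
    (v : Finset ι → ℝ) (hv : v ∅ = 0)
    (hconv : ∀ S T : Finset ι, IsDownset S → IsDownset T →
      v S + v T ≤ v (S ∪ T) + v (S ∩ T)) :
    (∀ S : ℕ → Finset ι, RestrictedChain 𝒩 S → marginal v S ∈ restrictedCore 𝒩 v) ∧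
      restrictedWeber 𝒩 v ⊆ restrictedCore 𝒩 v :=
  restrictedMarginal_mem_restrictedCore_of_convex_general 𝒩 v hv hconv
end
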